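/- Let G be a finite non-nilpotent group and C a connected component of the nilpotent graph of G. Then for every g ∈ C, the conjugate g⁻¹Cg = C; in particular C ⊆ N_G(C). -/

import Mathlib

def nilpotentizer (G : Type*) [Group G] : Set G :=
  {g | ∀ h : G, Group.IsNilpotent (Subgroup.closure ({g, h} : Set G))}

def nilpotentizerOf {G : Type*} [Group G] (x : G) : Set G :=
  {g | Group.IsNilpotent (Subgroup.closure ({g, x} : Set G))}

def nilpotentGraph (G : Type*) [Group G] :
    SimpleGraph {x : G // x ∉ nilpotentizer G} where
  Adj a b := a ≠ b ∧ Group.IsNilpotent (Subgroup.closure ({(a : G), (b : G)} : Set G))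
  symm := ⟨fun a b ⟨hne, h⟩ => ⟨fun e => hne e.symm, by rwa [Set.pair_comm]⟩⟩
  loopless := ⟨fun a ⟨h, _⟩ => h rfl⟩

noncomputable def hypercenter (G : Type*) [Group G] : Subgroup G := upperCentralSeries G (Nat.card G)

instance {G : Type*} [Group G] : (hypercenter G).Normal := by
  show (Subgroup.upperCentralSeries G (Nat.card G)).Normal; infer_instance

/-! Every group isomorphism preserves the nilpotentizer and the nilpotency of two-generated
subgroups, so it induces an isomorphism of nilpotent graphs. Conjugation by `g⁻¹` is thus a
graph automorphism; it permutes the connected components and fixes the vertex `g`, hence maps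
the component containing `g` onto itself. -/

namespace SimpleGraph

variable {V V' : Type*} {G : SimpleGraph V} {G' : SimpleGraph V'}

theorem Iso.image_supp (φ : G ≃g G') (C : G.ConnectedComponent) :
    φ '' C.supp = (φ.connectedComponentEquiv C).supp := by
  ext w
  constructor
  · rintro ⟨v, hv, rfl⟩
    exact ConnectedComponent.iso_image_comp_eq_map_iff_eq_comp.mpr hv
  · intro hw
    exact ⟨φ.symm w, ConnectedComponent.iso_inv_image_comp_eq_iff_eq_map.mpr hw,
      φ.apply_symm_apply w⟩

theorem Iso.image_supp_eq_of_apply_eq (φ : G ≃g G) {C : G.ConnectedComponent} {v : V}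
    (hv : v ∈ C.supp) (hφv : φ v = v) : φ '' C.supp = C.supp := by
  rw [φ.image_supp, ← (C.mem_supp_iff v).mp hv]
  simp [hφv]

end SimpleGraph

section MulEquiv

variable {G H : Type*} [Group G] [Group H]

theorem MulEquiv.isNilpotent_closure_image_iff (e : G ≃* H) (s : Set G) :
    Group.IsNilpotent (Subgroup.closure (e '' s)) ↔ Group.IsNilpotent (Subgroup.closure s) := by
  rw [← MonoidHom.coe_coe e, ← MonoidHom.map_closure]
  exact (Group.isNilpotent_congr ((Subgroup.closure s).equivMapOfInjective
    (e : G →* H) e.injective)).symm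

theorem MulEquiv.isNilpotent_closure_pair_iff (e : G ≃* H) (x y : G) :
    Group.IsNilpotent (Subgroup.closure ({e x, e y} : Set H)) ↔
      Group.IsNilpotent (Subgroup.closure ({x, y} : Set G)) := by
  rw [← Set.image_pair, e.isNilpotent_closure_image_iff]

theorem MulEquiv.map_mem_nilpotentizer_iff (e : G ≃* H) {x : G} :
    e x ∈ nilpotentizer H ↔ x ∈ nilpotentizer G := by
  simp only [nilpotentizer, Set.mem_ofPred_eq, e.surjective.forall, e.isNilpotent_closure_pair_iff]

def MulEquiv.nilpotentGraphIso (e : G ≃* H) : nilpotentGraph G ≃g nilpotentGraph H where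
  toEquiv := e.toEquiv.subtypeEquiv fun _ => e.map_mem_nilpotentizer_iff.symm.not
  map_rel_iff' {_ _} := by
    simp only [nilpotentGraph, Equiv.subtypeEquiv_apply, ne_eq, Subtype.mk.injEq,
      MulEquiv.toEquiv_eq_coe, EquivLike.coe_coe, e.injective.eq_iff, Subtype.val_inj,
      e.isNilpotent_closure_pair_iff]

@[simp]
theorem MulEquiv.coe_nilpotentGraphIso_apply (e : G ≃* H) (v : {x : G // x ∉ nilpotentizer G}) :
    (e.nilpotentGraphIso v : H) = e v :=
  rfl

end MulEquiv

theorem nilpotentGraph_component_conj_invariant_general {G : Type*} [Group G]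
    (C : (nilpotentGraph G).ConnectedComponent)
    (g : G) (hg : g ∈ Subtype.val '' C.supp) :
    (fun x => g⁻¹ * x * g) '' (Subtype.val '' C.supp) = Subtype.val '' C.supp := by
  obtain ⟨v, hv, rfl⟩ := hg
  set φ := (MulAut.conj (v : G)⁻¹).nilpotentGraphIso
  have hφv : φ v = v := Subtype.ext (by simp [φ])
  conv_rhs => rw [← φ.image_supp_eq_of_apply_eq hv hφv]
  rw [Set.image_image, Set.image_image]
  exact Set.image_congr fun w _ => by simp [φ]

theorem nilpotentGraph_component_conj_invariant {G : Type*} [Group G] [Finite G]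
    (hG : ¬ Group.IsNilpotent G)
    (C : (nilpotentGraph G).ConnectedComponent)
    (g : G) (hg : g ∈ Subtype.val '' C.supp) :
    (fun x => g⁻¹ * x * g) '' (Subtype.val '' C.supp) = Subtype.val '' C.supp :=
  nilpotentGraph_component_conj_invariant_general C g hg
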